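/- arXiv:2110.03222 — 2 statements merged into one kernel-verified Lean document; each statement's English description precedes it below -/
import Mathlib

section
/- Let U ⊆ ℝ^d be open, let ζ : ℝ^d → ℝ^q be twice continuously differentiable with the Gram matrix G(x) = g(x)^T g(x) invertible for all x ∈ U, and set Π(x) = I_d − g(x) G(x)^{-1} g(x)^T. Let φ : ℝ^d → ℝ^p be twice continuously differentiable with φ'(x) g(x) = 0 for all x ∈ U. Then for every x ∈ U, (1/2) φ'(x)(∇(ln det G)(x)) + Δφ(x) = Σ_{i=1}^d φ'(x)(Π'(x)(Π(x) e_i) e_i) + Σ_{i=1}^d φ''(x)(Π(x) e_i, Π(x) e_i), where Δφ(x) = Σ_{i=1}^d φ''(x)(e_i, e_i). -/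
/-!
Write `A = G⁻¹ gᵀ`, so that `Π = 1 - g A` and `Π eᵢ = eᵢ - g aᵢ` with `aᵢ = A eᵢ`.
Differentiating the tangency relation `φ'(y) (g(y) v) = 0` gives `φ''(x)(u, g(x) v) =
-φ'(x)(g'(x)(u) v)`, while `φ'(x)` kills the `g A'` part of `Π' = -(g' A + g A')`. Together with
the symmetry of `φ''(x)` this collapses the `i`-th summands of the right-hand side to
`φ''(x)(eᵢ, eᵢ) + φ'(x)(g'(x)(eᵢ) aᵢ)`. On the other side, Jacobi's formula gives
`∂ₖ log det G = tr (G⁻¹ ∂ₖ G) = 2 tr (A ∂ₖ g)`, and the symmetry `∂ₖ gᵢ = ∂ᵢ gₖ` of the second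
derivative of `ζ` turns this into `½ ∇ log det G = Σᵢ g'(x)(eᵢ) aᵢ`.
-/

open Matrix

lemma Matrix.det_updateRow_eq_sum_adjugate {n R : Type*} [Fintype n] [DecidableEq n] [CommRing R]
    (A : Matrix n n R) (i : n) (b : n → R) :
    (A.updateRow i b).det = ∑ j, A.adjugate j i * b j := by
  rw [← cramer_transpose_apply, cramer_eq_adjugate_mulVec, ← adjugate_transpose]
  rfl

noncomputable def Matrix.detRowContinuousMultilinear (n : Type*) [Fintype n] [DecidableEq n] :
    ContinuousMultilinearMap ℝ (fun _ : n => n → ℝ) ℝ :=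
  ⟨detRowAlternating.toMultilinearMap, continuous_id.matrix_det⟩

lemma Matrix.trace_inv_gram_mul {m n : Type*} [Fintype m] [Fintype n] [DecidableEq n]
    (g h : Matrix m n ℝ) :
    trace ((gᵀ * g)⁻¹ * (hᵀ * g + gᵀ * h)) = 2 * trace ((gᵀ * g)⁻¹ * gᵀ * h) := by
  have hsymm : ((gᵀ * g)⁻¹)ᵀ = (gᵀ * g)⁻¹ := by
    rw [transpose_nonsing_inv, transpose_mul, transpose_transpose]
  have hswap : trace ((gᵀ * g)⁻¹ * (hᵀ * g)) = trace ((gᵀ * g)⁻¹ * gᵀ * h) := by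
    rw [← trace_transpose, transpose_mul, transpose_mul, transpose_transpose, hsymm,
      Matrix.mul_assoc, trace_mul_comm, Matrix.mul_assoc, trace_mul_comm]
  rw [Matrix.mul_add, trace_add, hswap, Matrix.mul_assoc]
  ring

lemma Matrix.sum_mulVec_mulVec_single_of_comm {ι κ : Type*} [Fintype ι] [DecidableEq ι]
    [Fintype κ] (M : ι → Matrix ι κ ℝ) (A : Matrix κ ι ℝ)
    (hM : ∀ i k j, M k i j = M i k j) :
    ∑ i, M i *ᵥ (A *ᵥ Pi.single i 1) = fun k => trace (A * M k) := by
  ext k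
  simp only [Finset.sum_apply, mulVec_single_one, mulVec, dotProduct, col_apply, trace, diag,
    Matrix.mul_apply, hM k]
  rw [Finset.sum_comm]
  exact Finset.sum_congr rfl fun i _ => Finset.sum_congr rfl fun j _ => mul_comm _ _

section Calculus

variable {E : Type*} [NormedAddCommGroup E] [NormedSpace ℝ E]
  {F : Type*} [NormedAddCommGroup F] [NormedSpace ℝ F]
  {G : Type*} [NormedAddCommGroup G] [NormedSpace ℝ G] {x : E}

lemma fderiv_clm_apply_const {c : E → G →L[ℝ] F} (hc : DifferentiableAt ℝ c x) (w : G) (u : E) :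
    fderiv ℝ (fun y => c y w) x u = fderiv ℝ c x u w := by
  simp [fderiv_clm_apply hc (differentiableAt_const w)]

lemma fderiv_apply_add_apply_fderiv_eq_zero {Φ : E → G →L[ℝ] F} {V : E → G}
    (hΦ : DifferentiableAt ℝ Φ x) (hV : DifferentiableAt ℝ V x)
    (h : (fun y => Φ y (V y)) =ᶠ[nhds x] fun _ => 0) (u : E) :
    fderiv ℝ Φ x u (V x) + Φ x (fderiv ℝ V x u) = 0 := by
  have h0 : fderiv ℝ (fun y => Φ y (V y)) x = 0 := by
    rw [h.fderiv_eq, fderiv_const_apply]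
  have := congrArg (fun L => L u) h0
  simp only [fderiv_clm_apply hΦ hV, _root_.add_apply, ContinuousLinearMap.comp_apply,
    ContinuousLinearMap.flip_apply] at this
  rw [add_comm]
  exact this

lemma fderiv_euclideanSpace_apply {n : Type*} [Fintype n] {V : E → EuclideanSpace ℝ n}
    (hV : DifferentiableAt ℝ V x) (j : n) (u : E) :
    fderiv ℝ (fun y => V y j) x u = fderiv ℝ V x u j :=
  congrArg (fun L => L u)
    ((PiLp.proj 2 (fun _ : n => ℝ) j).hasFDerivAt.comp x hV.hasFDerivAt).fderiv

lemma EuclideanSpace.gradient_apply {ι : Type*} [Fintype ι] [DecidableEq ι]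
    (f : EuclideanSpace ℝ ι → ℝ) (x : EuclideanSpace ℝ ι) (k : ι) :
    gradient f x k = fderiv ℝ f x (EuclideanSpace.single k 1) := by
  rw [← toDual_gradient, InnerProductSpace.toDual_apply_apply, EuclideanSpace.inner_single_right]
  simp

end Calculus

section MatrixCalculus

variable {E : Type*} [NormedAddCommGroup E] [NormedSpace ℝ E] {m n r : Type*}

def EntrywiseDifferentiableAt (F : E → Matrix m n ℝ) (x : E) : Prop :=
  ∀ i j, DifferentiableAt ℝ (fun y => F y i j) x

noncomputable def matrixFDeriv (F : E → Matrix m n ℝ) (x w : E) : Matrix m n ℝ :=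
  Matrix.of fun i j => fderiv ℝ (fun y => F y i j) x w

lemma matrixFDeriv_sub_right (F : E → Matrix m n ℝ) (x u w : E) :
    matrixFDeriv F x (u - w) = matrixFDeriv F x u - matrixFDeriv F x w := by
  ext i j
  exact map_sub (fderiv ℝ (fun y => F y i j) x) u w

lemma matrixFDeriv_transpose (F : E → Matrix m n ℝ) (x w : E) :
    matrixFDeriv (fun y => (F y)ᵀ) x w = (matrixFDeriv F x w)ᵀ := rfl

lemma matrixFDeriv_const_sub (C : Matrix m n ℝ) (F : E → Matrix m n ℝ) (x w : E) :
    matrixFDeriv (fun y => C - F y) x w = -matrixFDeriv F x w := by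
  ext i j
  simp [matrixFDeriv, fderiv_const_sub]

namespace EntrywiseDifferentiableAt

variable {x : E}

lemma transpose {F : E → Matrix m n ℝ} (hF : EntrywiseDifferentiableAt F x) :
    EntrywiseDifferentiableAt (fun y => (F y)ᵀ) x :=
  fun i j => hF j i

lemma hasFDerivAt_mul_apply [Fintype n] {F : E → Matrix m n ℝ} {H : E → Matrix n r ℝ}
    (hF : EntrywiseDifferentiableAt F x) (hH : EntrywiseDifferentiableAt H x) (i : m) (k : r) :
    HasFDerivAt (fun y => (F y * H y) i k)
      (∑ j, (F x i j • fderiv ℝ (fun y => H y j k) x + H x j k • fderiv ℝ (fun y => F y i j) x))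
      x := by
  simp only [Matrix.mul_apply]
  exact HasFDerivAt.fun_sum fun j _ => (hF i j).hasFDerivAt.mul (hH j k).hasFDerivAt

lemma mul [Fintype n] {F : E → Matrix m n ℝ} {H : E → Matrix n r ℝ}
    (hF : EntrywiseDifferentiableAt F x) (hH : EntrywiseDifferentiableAt H x) :
    EntrywiseDifferentiableAt (fun y => F y * H y) x := fun i k =>
  (hF.hasFDerivAt_mul_apply hH i k).differentiableAt

lemma hasFDerivAt_mulVec_apply [Fintype n] {F : E → Matrix m n ℝ}
    (hF : EntrywiseDifferentiableAt F x) (v : n → ℝ) (i : m) :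
    HasFDerivAt (fun y => (F y *ᵥ v) i) (∑ j, v j • fderiv ℝ (fun y => F y i j) x) x := by
  simp only [mulVec, dotProduct]
  exact HasFDerivAt.fun_sum fun j _ => (hF i j).hasFDerivAt.mul_const (v j)

lemma differentiableAt_toLp_mulVec [Finite m] [Fintype n] {F : E → Matrix m n ℝ}
    (hF : EntrywiseDifferentiableAt F x) (v : n → ℝ) :
    DifferentiableAt ℝ (fun y => WithLp.toLp 2 (F y *ᵥ v)) x :=
  (differentiableAt_piLp 2).2 fun i => (hF.hasFDerivAt_mulVec_apply v i).differentiableAt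

lemma fderiv_toLp_mulVec [Fintype m] [Fintype n] {F : E → Matrix m n ℝ}
    (hF : EntrywiseDifferentiableAt F x) (v : n → ℝ) (w : E) :
    fderiv ℝ (fun y => WithLp.toLp 2 (F y *ᵥ v)) x w
      = WithLp.toLp 2 (matrixFDeriv F x w *ᵥ v) := by
  ext i
  rw [← fderiv_euclideanSpace_apply (hF.differentiableAt_toLp_mulVec v),
    (hF.hasFDerivAt_mulVec_apply v i).fderiv]
  simp only [_root_.sum_apply, _root_.smul_apply, smul_eq_mul, mulVec, dotProduct, matrixFDeriv,
    Matrix.of_apply]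
  exact Finset.sum_congr rfl fun j _ => mul_comm _ _

variable [DecidableEq n] {F : E → Matrix n n ℝ}

lemma updateRow (hF : EntrywiseDifferentiableAt F x) (i : n) (b : n → ℝ) :
    EntrywiseDifferentiableAt (fun y => (F y).updateRow i b) x := fun k l => by
  by_cases h : k = i
  · subst h
    simp only [updateRow_self]
    exact differentiableAt_const _
  · simp only [updateRow_ne h]
    exact hF k l

variable [Fintype n]

lemma hasFDerivAt_det (hF : EntrywiseDifferentiableAt F x) :
    HasFDerivAt (fun y => (F y).det)
      (∑ i, ∑ j, (F x).adjugate j i • fderiv ℝ (fun y => F y i j) x) x := by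
  have hrow : ∀ i, HasFDerivAt (fun y => F y i)
      (ContinuousLinearMap.pi fun j => fderiv ℝ (fun y => F y i j) x) x := fun i =>
    hasFDerivAt_pi.2 fun j => (hF i j).hasFDerivAt
  refine (HasFDerivAt.multilinear_comp (detRowContinuousMultilinear n) hrow).congr_fderiv ?_
  ext v
  simp only [_root_.sum_apply, ContinuousLinearMap.comp_apply, _root_.smul_apply,
    ContinuousMultilinearMap.toContinuousLinearMap_apply, smul_eq_mul]
  exact Finset.sum_congr rfl fun i _ => (F x).det_updateRow_eq_sum_adjugate i _

lemma fderiv_det (hF : EntrywiseDifferentiableAt F x) (w : E) :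
    fderiv ℝ (fun y => (F y).det) x w = trace ((F x).adjugate * matrixFDeriv F x w) := by
  rw [hF.hasFDerivAt_det.fderiv, Finset.sum_comm]
  simp [trace, Matrix.mul_apply, matrixFDeriv]

lemma fderiv_log_det (hF : EntrywiseDifferentiableAt F x) (hx : IsUnit (F x)) (w : E) :
    fderiv ℝ (fun y => Real.log (F y).det) x w = trace ((F x)⁻¹ * matrixFDeriv F x w) := by
  have hdet : (F x).det ≠ 0 := ((isUnit_iff_isUnit_det _).1 hx).ne_zero
  rw [(hF.hasFDerivAt_det.log hdet).fderiv, _root_.smul_apply, ← hF.hasFDerivAt_det.fderiv,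
    hF.fderiv_det, inv_def, Ring.inverse_eq_inv', smul_mul, trace_smul, smul_eq_mul]

lemma adjugate (hF : EntrywiseDifferentiableAt F x) :
    EntrywiseDifferentiableAt (fun y => (F y).adjugate) x := fun i j => by
  simp only [adjugate_apply]
  exact (hF.updateRow j _).hasFDerivAt_det.differentiableAt

lemma inv (hF : EntrywiseDifferentiableAt F x) (hx : IsUnit (F x)) :
    EntrywiseDifferentiableAt (fun y => (F y)⁻¹) x := fun i j => by
  simp only [inv_def, Matrix.smul_apply, Ring.inverse_eq_inv', smul_eq_mul]
  exact (hF.hasFDerivAt_det.differentiableAt.inv ((isUnit_iff_isUnit_det _).1 hx).ne_zero).mul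
    (hF.adjugate i j)

end EntrywiseDifferentiableAt

lemma matrixFDeriv_mul [Fintype n] {F : E → Matrix m n ℝ} {H : E → Matrix n r ℝ} {x : E}
    (hF : EntrywiseDifferentiableAt F x) (hH : EntrywiseDifferentiableAt H x) (w : E) :
    matrixFDeriv (fun y => F y * H y) x w
      = matrixFDeriv F x w * H x + F x * matrixFDeriv H x w := by
  ext i k
  rw [matrixFDeriv, Matrix.of_apply, (hF.hasFDerivAt_mul_apply hH i k).fderiv]
  simp only [matrixFDeriv, Matrix.of_apply, Matrix.add_apply, Matrix.mul_apply,
    ← Finset.sum_add_distrib, _root_.sum_apply, _root_.add_apply, _root_.smul_apply, smul_eq_mul]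
  exact Finset.sum_congr rfl fun j _ => by ring

lemma fderiv_log_det_gram [Fintype m] [Fintype n] [DecidableEq n] {g : E → Matrix m n ℝ} {x : E}
    (hg : EntrywiseDifferentiableAt g x) (hG : IsUnit ((g x)ᵀ * g x)) (w : E) :
    fderiv ℝ (fun y => Real.log ((g y)ᵀ * g y).det) x w
      = 2 * trace (((g x)ᵀ * g x)⁻¹ * (g x)ᵀ * matrixFDeriv g x w) := by
  rw [(hg.transpose.mul hg).fderiv_log_det hG, matrixFDeriv_mul hg.transpose hg,
    matrixFDeriv_transpose, trace_inv_gram_mul]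

end MatrixCalculus

section Jacobian

variable {ι κ : Type*} [Fintype ι] [DecidableEq ι] [Fintype κ]
  {ζ : EuclideanSpace ℝ ι → EuclideanSpace ℝ κ} {g : EuclideanSpace ℝ ι → Matrix ι κ ℝ}
  {x : EuclideanSpace ℝ ι}

lemma entrywiseDifferentiableAt_of_fderiv (hζ : DifferentiableAt ℝ (fderiv ℝ ζ) x)
    (hg : ∀ y i j, g y i j = fderiv ℝ ζ y (EuclideanSpace.single i 1) j) :
    EntrywiseDifferentiableAt g x := fun i j => by
  simp only [hg]
  exact (differentiableAt_piLp 2).1 (hζ.clm_apply (differentiableAt_const _)) j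

lemma matrixFDeriv_eq_fderiv_fderiv (hζ : DifferentiableAt ℝ (fderiv ℝ ζ) x)
    (hg : ∀ y i j, g y i j = fderiv ℝ ζ y (EuclideanSpace.single i 1) j)
    (u : EuclideanSpace ℝ ι) (i : ι) (j : κ) :
    matrixFDeriv g x u i j = fderiv ℝ (fderiv ℝ ζ) x u (EuclideanSpace.single i 1) j := by
  simp only [matrixFDeriv, Matrix.of_apply, hg]
  rw [fderiv_euclideanSpace_apply (hζ.clm_apply (differentiableAt_const _)),
    fderiv_clm_apply_const hζ]

lemma matrixFDeriv_single_comm (hζ : ContDiffAt ℝ 2 ζ x)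
    (hg : ∀ y i j, g y i j = fderiv ℝ ζ y (EuclideanSpace.single i 1) j) (i k : ι) (j : κ) :
    matrixFDeriv g x (EuclideanSpace.single k 1) i j
      = matrixFDeriv g x (EuclideanSpace.single i 1) k j := by
  have hζ' : DifferentiableAt ℝ (fderiv ℝ ζ) x :=
    (hζ.fderiv_right le_rfl).differentiableAt one_ne_zero
  rw [matrixFDeriv_eq_fderiv_fderiv hζ' hg, matrixFDeriv_eq_fderiv_fderiv hζ' hg,
    (hζ.isSymmSndFDerivAt (by simp)).eq]

lemma gradient_log_det_gram [DecidableEq κ] (hζ : ContDiffAt ℝ 2 ζ x)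
    (hg : ∀ y i j, g y i j = fderiv ℝ ζ y (EuclideanSpace.single i 1) j)
    (hG : IsUnit ((g x)ᵀ * g x)) :
    gradient (fun y => Real.log ((g y)ᵀ * g y).det) x
      = (2 : ℝ) • WithLp.toLp 2 (∑ i, matrixFDeriv g x (EuclideanSpace.single i 1)
          *ᵥ ((((g x)ᵀ * g x)⁻¹ * (g x)ᵀ) *ᵥ Pi.single i 1)) := by
  have hgx : EntrywiseDifferentiableAt g x :=
    entrywiseDifferentiableAt_of_fderiv ((hζ.fderiv_right le_rfl).differentiableAt one_ne_zero) hg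
  rw [sum_mulVec_mulVec_single_of_comm (fun i => matrixFDeriv g x (EuclideanSpace.single i 1)) _
    fun i k j => matrixFDeriv_single_comm hζ hg i k j]
  ext k
  rw [EuclideanSpace.gradient_apply, fderiv_log_det_gram hgx hG]
  rfl

end Jacobian

section Tangency

variable {ι κ : Type*} [Fintype ι] [Fintype κ]
  {F : Type*} [NormedAddCommGroup F] [NormedSpace ℝ F]
  {φ : EuclideanSpace ℝ ι → F} {g : EuclideanSpace ℝ ι → Matrix ι κ ℝ}
  {x : EuclideanSpace ℝ ι}

lemma fderiv_fderiv_apply_toLp_mulVec {U : Set (EuclideanSpace ℝ ι)} (hU : U ∈ nhds x)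
    (hφ : DifferentiableAt ℝ (fderiv ℝ φ) x) (hg : EntrywiseDifferentiableAt g x)
    (htan : ∀ y ∈ U, ∀ v, fderiv ℝ φ y (WithLp.toLp 2 (g y *ᵥ v)) = 0)
    (u : EuclideanSpace ℝ ι) (v : κ → ℝ) :
    fderiv ℝ (fderiv ℝ φ) x u (WithLp.toLp 2 (g x *ᵥ v))
      = -fderiv ℝ φ x (WithLp.toLp 2 (matrixFDeriv g x u *ᵥ v)) := by
  refine eq_neg_of_add_eq_zero_left ?_
  rw [← hg.fderiv_toLp_mulVec v u]
  exact fderiv_apply_add_apply_fderiv_eq_zero hφ (hg.differentiableAt_toLp_mulVec v)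
    (Filter.mem_of_superset hU fun y hy => htan y hy v) u

lemma apply_matrixFDeriv_one_sub_mul_mulVec [DecidableEq ι]
    {A : EuclideanSpace ℝ ι → Matrix κ ι ℝ}
    (hg : EntrywiseDifferentiableAt g x) (hA : EntrywiseDifferentiableAt A x)
    (D : EuclideanSpace ℝ ι →L[ℝ] F) (hD : ∀ v, D (WithLp.toLp 2 (g x *ᵥ v)) = 0)
    (w : EuclideanSpace ℝ ι) (v : ι → ℝ) :
    D (WithLp.toLp 2 (matrixFDeriv (fun y => 1 - g y * A y) x w *ᵥ v))
      = -D (WithLp.toLp 2 (matrixFDeriv g x w *ᵥ (A x *ᵥ v))) := by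
  rw [matrixFDeriv_const_sub, matrixFDeriv_mul hg hA, neg_mulVec, add_mulVec, ← mulVec_mulVec,
    ← mulVec_mulVec, WithLp.toLp_neg, WithLp.toLp_add, map_neg, map_add, hD, add_zero]

lemma fderiv_proj_add_fderiv_fderiv_proj [DecidableEq ι] {U : Set (EuclideanSpace ℝ ι)}
    {A : EuclideanSpace ℝ ι → Matrix κ ι ℝ}
    (hU : U ∈ nhds x) (hφ : ContDiffAt ℝ 2 φ x)
    (hg : EntrywiseDifferentiableAt g x) (hA : EntrywiseDifferentiableAt A x)
    (htan : ∀ y ∈ U, ∀ v, fderiv ℝ φ y (WithLp.toLp 2 (g y *ᵥ v)) = 0) (v : ι → ℝ) :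
    fderiv ℝ φ x (WithLp.toLp 2 (matrixFDeriv (fun y => 1 - g y * A y) x
        (WithLp.toLp 2 ((1 - g x * A x) *ᵥ v)) *ᵥ v))
      + fderiv ℝ (fderiv ℝ φ) x (WithLp.toLp 2 ((1 - g x * A x) *ᵥ v))
          (WithLp.toLp 2 ((1 - g x * A x) *ᵥ v))
      = fderiv ℝ (fderiv ℝ φ) x (WithLp.toLp 2 v) (WithLp.toLp 2 v)
        + fderiv ℝ φ x (WithLp.toLp 2 (matrixFDeriv g x (WithLp.toLp 2 v) *ᵥ (A x *ᵥ v))) := by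
  have hφ' : DifferentiableAt ℝ (fderiv ℝ φ) x :=
    (hφ.fderiv_right le_rfl).differentiableAt one_ne_zero
  have hproj : WithLp.toLp 2 ((1 - g x * A x) *ᵥ v)
      = WithLp.toLp 2 v - WithLp.toLp 2 (g x *ᵥ (A x *ᵥ v)) := by
    rw [sub_mulVec, one_mulVec, mulVec_mulVec, WithLp.toLp_sub]
  have hnormal := fderiv_fderiv_apply_toLp_mulVec hU hφ' hg htan
  have hsymm := (hφ.isSymmSndFDerivAt (by simp)).eq (WithLp.toLp 2 (g x *ᵥ (A x *ᵥ v)))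
    (WithLp.toLp 2 v)
  have hD : ∀ w, fderiv ℝ φ x (WithLp.toLp 2 (g x *ᵥ w)) = 0 := htan x (mem_of_mem_nhds hU)
  rw [apply_matrixFDeriv_one_sub_mul_mulVec hg hA _ hD, hproj, matrixFDeriv_sub_right,
    sub_mulVec, WithLp.toLp_sub, map_sub, map_sub, map_sub, _root_.sub_apply, _root_.sub_apply,
    hsymm, hnormal, hnormal]
  abel

end Tangency

/-- Let `U` be open, `ζ : ℝ^d → ℝ^q` be `C²` with Gram matrix
`G = gᵀ g` invertible on `U`, and `Π(x) = I_d − g(x) G(x)⁻¹ g(x)ᵀ`. Let `φ : ℝ^d → ℝ^p`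
be `C²` with `φ'(x) g(x) = 0` on `U`. Then for every `x ∈ U`,
`(1/2) φ'(x)(∇(ln det G)(x)) + Δφ(x)
  = Σ_i φ'(x)(Pr(x)(Π(x) e_i) e_i) + Σ_i φ''(x)(Π(x) e_i, Π(x) e_i)`. -/
theorem laplacian_projection_identity (d p q : ℕ)
    (U : Set (EuclideanSpace ℝ (Fin d))) (hU : IsOpen U)
    (ζ : EuclideanSpace ℝ (Fin d) → EuclideanSpace ℝ (Fin q)) (hζ : ContDiff ℝ 2 ζ)
    (g : EuclideanSpace ℝ (Fin d) → Matrix (Fin d) (Fin q) ℝ)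
    (hg : ∀ y i j, g y i j = fderiv ℝ ζ y (EuclideanSpace.single i 1) j)
    (hGinv : ∀ y ∈ U, IsUnit ((g y)ᵀ * g y))
    (Pr : EuclideanSpace ℝ (Fin d) → Matrix (Fin d) (Fin d) ℝ)
    (hPr : ∀ y, Pr y = 1 - g y * ((g y)ᵀ * g y)⁻¹ * (g y)ᵀ)
    (φ : EuclideanSpace ℝ (Fin d) → EuclideanSpace ℝ (Fin p)) (hφ : ContDiff ℝ 2 φ)
    (htan : ∀ y ∈ U, ∀ M : EuclideanSpace ℝ (Fin q),
      fderiv ℝ φ y (Matrix.toEuclideanLin (g y) M) = 0) :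
    ∀ x ∈ U,
      (1 / 2 : ℝ) • fderiv ℝ φ x
          (gradient (fun y => Real.log ((g y)ᵀ * g y).det) x)
        + ∑ i : Fin d,
            fderiv ℝ (fun y => fderiv ℝ φ y (EuclideanSpace.single i 1)) x
              (EuclideanSpace.single i 1)
      = (∑ i : Fin d,
          fderiv ℝ φ x ((WithLp.equiv 2 (Fin d → ℝ)).symm
            ((Matrix.of fun k l => fderiv ℝ (fun y => Pr y k l) x
                ((WithLp.equiv 2 (Fin d → ℝ)).symm
                  ((Pr x).mulVec (Pi.single i 1)))).mulVec (Pi.single i 1))))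
        + ∑ i : Fin d,
            fderiv ℝ (fun y => fderiv ℝ φ y
                ((WithLp.equiv 2 (Fin d → ℝ)).symm ((Pr x).mulVec (Pi.single i 1)))) x
              ((WithLp.equiv 2 (Fin d → ℝ)).symm ((Pr x).mulVec (Pi.single i 1))) := by
  intro x hx
  obtain rfl : Pr = fun y => 1 - g y * (((g y)ᵀ * g y)⁻¹ * (g y)ᵀ) :=
    funext fun y => by rw [hPr, Matrix.mul_assoc]
  have hφ' : DifferentiableAt ℝ (fderiv ℝ φ) x :=
    ((hφ.fderiv_right le_rfl).differentiable one_ne_zero).differentiableAt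
  have hgx : EntrywiseDifferentiableAt g x := entrywiseDifferentiableAt_of_fderiv
    ((hζ.fderiv_right le_rfl).differentiable one_ne_zero).differentiableAt hg
  have hAx : EntrywiseDifferentiableAt (fun y => ((g y)ᵀ * g y)⁻¹ * (g y)ᵀ) x :=
    ((hgx.transpose.mul hgx).inv (hGinv x hx)).mul hgx.transpose
  have htan' : ∀ y ∈ U, ∀ v, fderiv ℝ φ y (WithLp.toLp 2 (g y *ᵥ v)) = 0 := fun y hy v => by
    simpa using htan y hy (WithLp.toLp 2 v)
  simp only [WithLp.equiv_symm_apply, fderiv_clm_apply_const hφ',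
    gradient_log_det_gram hζ.contDiffAt hg (hGinv x hx), map_smul, smul_smul, WithLp.toLp_sum,
    map_sum]
  rw [← Finset.sum_add_distrib]
  refine Eq.trans ?_ (Finset.sum_congr rfl fun i _ => (fderiv_proj_add_fderiv_fderiv_proj
    (hU.mem_nhds hx) hφ.contDiffAt hgx hAx htan' (Pi.single i 1)).symm)
  rw [Finset.sum_add_distrib, add_comm]
  norm_num [PiLp.toLp_single]
end

section
/- Let B, c, M > 0. Let ζ : ℝ^d → ℝ^q be continuously differentiable with g = ∇ζ (transpose Jacobian) satisfying ‖g(x)‖ ≤ B for all x. Fix x ∈ ℝ^d and assume that for every z ∈ ℝ^d the matrix G_z(x) is invertible with ‖G_z(x)^{-1}‖ ≤ (1 + |z|)/c. Then there exist h₀ > 0 and C > 0 depending only on B, c, M such that: for every h ∈ (0, h₀], every Y_{1/2}, Y_1 ∈ ℝ^d and z_{1/2}, z_1 ∈ ℝ^q with |Y_{1/2}|, |Y_1| ≤ M and |z_{1/2}|, |z_1| ≤ M, and every X₁ ∈ ℝ^d, λ ∈ ℝ^q satisfying X₁ = x + √h Y_{1/2} + h Y_1 + g(x) λ and ζ(X₁)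 = ζ(x) + √h z_{1/2} + h z_1, one has |X₁ − x| ≤ C √h and |λ| ≤ C √h. -/
open Matrix intervalIntegral
open scoped Matrix.Norms.L2Operator

/-! By the fundamental theorem of calculus, `ζ (x + z) - ζ x = A_zᵀ z` with `z = X₁ - x` and
`A_z = ∫₀¹ g (x + τ z) dτ`. Substituting `z = √h Y₁₂ + h Y₁ + g x λ` yields
`G_z λ = √h z₁₂ + h z₁ - A_zᵀ (√h Y₁₂ + h Y₁)`, of size `O(√h)` since `‖A_z‖ ≤ B`; hence
`|λ| ≤ (1 + |z|) O(√h) / c`. As `|z| ≤ O(√h) + B |λ|`, for `h` small the contribution of `B |λ|`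
is at most `|λ| / 2` and can be absorbed, so `|λ| = O(√h)`, and then `|z| = O(√h)`. -/

namespace Matrix

variable {m n : Type*} [Fintype m] [Fintype n] [DecidableEq n]

theorem norm_toEuclideanLin_apply_le (A : Matrix m n ℝ) (v : EuclideanSpace ℝ n) :
    ‖toEuclideanLin A v‖ ≤ ‖A‖ * ‖v‖ :=
  A.l2_opNorm_mulVec v

theorem l2_opNorm_transpose [DecidableEq m] (A : Matrix m n ℝ) : ‖Aᵀ‖ = ‖A‖ := by
  rw [← conjTranspose_eq_transpose_of_trivial, l2_opNorm_conjTranspose]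

theorem norm_le_norm_inv_mul_norm_toEuclideanLin_apply {G : Matrix n n ℝ} (hG : IsUnit G)
    (v : EuclideanSpace ℝ n) : ‖v‖ ≤ ‖G⁻¹‖ * ‖toEuclideanLin G v‖ := by
  have hv : toEuclideanLin G⁻¹ (toEuclideanLin G v) = v := by
    rw [← LinearMap.comp_apply, ← toLpLin_mul_same,
      nonsing_inv_mul G ((isUnit_iff_isUnit_det G).mp hG), toLpLin_one, LinearMap.id_apply]
  calc ‖v‖ = ‖toEuclideanLin G⁻¹ (toEuclideanLin G v)‖ := by rw [hv]
    _ ≤ ‖G⁻¹‖ * ‖toEuclideanLin G v‖ := norm_toEuclideanLin_apply_le _ _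

theorem norm_sub_le_of_eq_add_add_toEuclideanLin {B : ℝ} {A : Matrix m n ℝ} (hA : ‖A‖ ≤ B)
    {x w X : EuclideanSpace ℝ m} {v : EuclideanSpace ℝ n} (hX : X = x + w + toEuclideanLin A v) :
    ‖X - x‖ ≤ ‖w‖ + B * ‖v‖ := by
  rw [hX, add_assoc, add_sub_cancel_left]
  grw [norm_add_le, norm_toEuclideanLin_apply_le, hA]

end Matrix

theorem norm_sqrt_smul_add_smul_le {E : Type*} [NormedAddCommGroup E] [NormedSpace ℝ E]
    {h M : ℝ} (hh : 0 ≤ h) (hh₁ : h ≤ 1) {a b : E} (ha : ‖a‖ ≤ M) (hb : ‖b‖ ≤ M) :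
    ‖√h • a + h • b‖ ≤ 2 * M * √h := by
  have hM : 0 ≤ M := (norm_nonneg a).trans ha
  have hh_le : h ≤ √h := Real.le_sqrt_self_iff.mpr hh₁
  calc ‖√h • a + h • b‖ ≤ √h * ‖a‖ + h * ‖b‖ := by
        grw [norm_add_le, norm_smul, norm_smul, Real.norm_of_nonneg (Real.sqrt_nonneg h),
          Real.norm_of_nonneg hh]
    _ ≤ √h * M + √h * M := by gcongr
    _ = 2 * M * √h := by ring

theorem le_two_mul_mul_div_of_le_add_mul_div_mul {l a b c k : ℝ} (hc : 0 < c)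
    (hl₀ : 0 ≤ l) (hbk : b * k ≤ c / 2) (hl : l ≤ (a + b * l) / c * k) : l ≤ 2 * a * k / c := by
  rw [div_mul_eq_mul_div, le_div_iff₀ hc] at hl
  rw [le_div_iff₀ hc]
  nlinarith [mul_le_mul_of_nonneg_left hbk hl₀]

section Gradient

variable {ι κ : Type*} [Fintype ι] [DecidableEq ι]
  {ζ : EuclideanSpace ℝ ι → EuclideanSpace ℝ κ} {g : EuclideanSpace ℝ ι → Matrix ι κ ℝ}

theorem fderiv_apply_eq_toEuclideanLin_transpose
    (hg : ∀ x i j, g x i j = fderiv ℝ ζ x (EuclideanSpace.single i 1) j)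
    (x v : EuclideanSpace ℝ ι) : fderiv ℝ ζ x v = toEuclideanLin (g x)ᵀ v := by
  have : (fderiv ℝ ζ x : EuclideanSpace ℝ ι →ₗ[ℝ] EuclideanSpace ℝ κ) = toEuclideanLin (g x)ᵀ := by
    refine (EuclideanSpace.basisFun ι ℝ).toBasis.ext fun i => ?_
    ext j
    simp [hg, toLpLin_apply, mulVec_single]
  exact DFunLike.congr_fun this v

variable [Fintype κ]

theorem continuous_of_contDiff_of_fderiv_entries (hζ : ContDiff ℝ 1 ζ)
    (hg : ∀ x i j, g x i j = fderiv ℝ ζ x (EuclideanSpace.single i 1) j) : Continuous g := by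
  have hfd := hζ.continuous_fderiv one_ne_zero
  refine continuous_pi fun i => continuous_pi fun j => ?_
  simp only [hg]
  fun_prop

variable [DecidableEq κ]

theorem sub_eq_toEuclideanLin_integral_transpose (hζ : ContDiff ℝ 1 ζ)
    (hg : ∀ x i j, g x i j = fderiv ℝ ζ x (EuclideanSpace.single i 1) j)
    (x z : EuclideanSpace ℝ ι) :
    ζ (x + z) - ζ x = toEuclideanLin (∫ τ in (0:ℝ)..1, g (x + τ • z))ᵀ z := by
  let L : Matrix ι κ ℝ →L[ℝ] EuclideanSpace ℝ κ := LinearMap.toContinuousLinearMap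
    ((LinearMap.applyₗ z).comp ((toEuclideanLin : Matrix κ ι ℝ ≃ₗ[ℝ] _).toLinearMap.comp
      (transposeLinearEquiv ι κ ℝ ℝ).toLinearMap))
  have hpath : Continuous fun τ : ℝ => g (x + τ • z) :=
    (continuous_of_contDiff_of_fderiv_entries hζ hg).comp (by fun_prop)
  have hderiv : ∀ τ ∈ Set.uIcc (0:ℝ) 1,
      HasDerivAt (fun τ : ℝ => ζ (x + τ • z)) (L (g (x + τ • z))) τ := by
    intro τ _
    have hline : HasDerivAt (fun τ : ℝ => x + τ • z) z τ := by
      simpa using ((hasDerivAt_id τ).smul_const z).const_add x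
    have hcomp := (hζ.differentiable one_ne_zero _).hasFDerivAt.comp_hasDerivAt τ hline
    rwa [fderiv_apply_eq_toEuclideanLin_transpose hg] at hcomp
  have hftc :=
    integral_eq_sub_of_hasDerivAt hderiv ((L.continuous.comp hpath).intervalIntegrable 0 1)
  rw [L.intervalIntegral_comp_comm (hpath.intervalIntegrable 0 1)] at hftc
  simp only [one_smul, zero_smul, add_zero] at hftc
  exact hftc.symm

theorem norm_lagrange_le_norm_inv_mul {B : ℝ} (hζ : ContDiff ℝ 1 ζ)
    (hg : ∀ x i j, g x i j = fderiv ℝ ζ x (EuclideanSpace.single i 1) j) (hgB : ∀ y, ‖g y‖ ≤ B)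
    {x w X : EuclideanSpace ℝ ι} {r lam : EuclideanSpace ℝ κ}
    (hG : IsUnit ((∫ τ in (0:ℝ)..1, g (x + τ • (X - x)))ᵀ * g x))
    (hX : X = x + w + toEuclideanLin (g x) lam) (hζX : ζ X = ζ x + r) :
    ‖lam‖ ≤ ‖((∫ τ in (0:ℝ)..1, g (x + τ • (X - x)))ᵀ * g x)⁻¹‖ * (‖r‖ + B * ‖w‖) := by
  set A := ∫ τ in (0:ℝ)..1, g (x + τ • (X - x))
  have hA : ‖Aᵀ‖ ≤ B := by
    rw [l2_opNorm_transpose]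
    simpa using norm_integral_le_of_norm_le_const (a := 0) (b := 1)
      fun τ _ => hgB (x + τ • (X - x))
  have hgram : toEuclideanLin (Aᵀ * g x) lam = r - toEuclideanLin Aᵀ w := by
    have hftc : ζ X - ζ x = toEuclideanLin Aᵀ (X - x) := by
      rw [← sub_eq_toEuclideanLin_integral_transpose hζ hg, add_sub_cancel]
    have hstep : X - x = w + toEuclideanLin (g x) lam := by rw [hX]; abel
    rw [hζX, add_sub_cancel_left, hstep, map_add] at hftc
    rw [hftc, toLpLin_mul_same, LinearMap.comp_apply, add_sub_cancel_left]
  calc ‖lam‖ ≤ ‖(Aᵀ * g x)⁻¹‖ * ‖toEuclideanLin (Aᵀ * g x) lam‖ :=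
        norm_le_norm_inv_mul_norm_toEuclideanLin_apply hG lam
    _ ≤ ‖(Aᵀ * g x)⁻¹‖ * (‖r‖ + B * ‖w‖) := by
        gcongr
        rw [hgram]
        grw [norm_sub_le, norm_toEuclideanLin_apply_le, hA]

theorem norm_lagrange_le {B c ρ : ℝ} (hc : 0 < c) (hζ : ContDiff ℝ 1 ζ)
    (hg : ∀ x i j, g x i j = fderiv ℝ ζ x (EuclideanSpace.single i 1) j) (hgB : ∀ y, ‖g y‖ ≤ B)
    {x w X : EuclideanSpace ℝ ι} {r lam : EuclideanSpace ℝ κ}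
    (hG : IsUnit ((∫ τ in (0:ℝ)..1, g (x + τ • (X - x)))ᵀ * g x))
    (hGinv : ‖((∫ τ in (0:ℝ)..1, g (x + τ • (X - x)))ᵀ * g x)⁻¹‖ ≤ (1 + ‖X - x‖) / c)
    (hX : X = x + w + toEuclideanLin (g x) lam) (hζX : ζ X = ζ x + r)
    (hw : ‖w‖ ≤ ρ) (hr : ‖r‖ ≤ ρ) (hsmall : B * ((1 + B) * ρ) ≤ c / 2) :
    ‖lam‖ ≤ 2 * (1 + ρ) * ((1 + B) * ρ) / c := by
  have hB : 0 ≤ B := (norm_nonneg _).trans (hgB x)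
  refine le_two_mul_mul_div_of_le_add_mul_div_mul hc (norm_nonneg _) hsmall ?_
  calc ‖lam‖ ≤ (1 + ‖X - x‖) / c * (‖r‖ + B * ‖w‖) :=
        (norm_lagrange_le_norm_inv_mul hζ hg hgB hG hX hζX).trans (by gcongr)
    _ ≤ (1 + (ρ + B * ‖lam‖)) / c * (ρ + B * ρ) := by
        have hρ : 0 ≤ ρ := (norm_nonneg w).trans hw
        gcongr
        exact (norm_sub_le_of_eq_add_add_toEuclideanLin (hgB x) hX).trans (by gcongr)
    _ = (1 + ρ + B * ‖lam‖) / c * ((1 + B) * ρ) := by ring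

end Gradient

/-- Let `B, c, M > 0`. Let `ζ : ℝ^d → ℝ^q` be `C¹` with
`g = ∇ζ` (transpose Jacobian) satisfying `‖g(x)‖ ≤ B` for all `x`. Fix `x` and assume that
for every `z` the matrix `G_z(x) = (∫₀¹ g(x + τ z) dτ)ᵀ g(x)` is invertible with
`‖G_z(x)⁻¹‖ ≤ (1 + |z|)/c`. Then there exist `h₀ > 0` and `C > 0` depending only on
`B, c, M` such that: for every `h ∈ (0, h₀]`, all data `Y_{1/2}, Y₁, z_{1/2}, z₁` bounded
by `M`, and every `X₁, λ` satisfying `X₁ = x + √h Y_{1/2} + h Y₁ + g(x) λ` and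
`ζ(X₁) = ζ(x) + √h z_{1/2} + h z₁`, one has `|X₁ − x| ≤ C √h` and `|λ| ≤ C √h`. -/
theorem one_step_lagrange_bound (d q : ℕ) (B c M : ℝ) (hB : 0 < B) (hc : 0 < c)
    (hM : 0 < M) :
    ∃ h₀ > (0:ℝ), ∃ C > (0:ℝ),
      ∀ (ζ : EuclideanSpace ℝ (Fin d) → EuclideanSpace ℝ (Fin q))
        (g : EuclideanSpace ℝ (Fin d) → Matrix (Fin d) (Fin q) ℝ),
        ContDiff ℝ 1 ζ →
        (∀ x i j, g x i j = fderiv ℝ ζ x (EuclideanSpace.single i 1) j) →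
        (∀ x, ‖g x‖ ≤ B) →
        ∀ x : EuclideanSpace ℝ (Fin d),
        (∀ z : EuclideanSpace ℝ (Fin d),
          IsUnit ((∫ τ in (0:ℝ)..1, g (x + τ • z))ᵀ * g x)) →
        (∀ z : EuclideanSpace ℝ (Fin d),
          ‖(((∫ τ in (0:ℝ)..1, g (x + τ • z))ᵀ * g x)⁻¹ : Matrix (Fin q) (Fin q) ℝ)‖
            ≤ (1 + ‖z‖) / c) →
        ∀ h : ℝ, 0 < h → h ≤ h₀ →
        ∀ (Y₁₂ Y₁ : EuclideanSpace ℝ (Fin d)) (z₁₂ z₁ : EuclideanSpace ℝ (Fin q)),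
          ‖Y₁₂‖ ≤ M → ‖Y₁‖ ≤ M → ‖z₁₂‖ ≤ M → ‖z₁‖ ≤ M →
        ∀ (X₁ : EuclideanSpace ℝ (Fin d)) (lam : EuclideanSpace ℝ (Fin q)),
          X₁ = x + Real.sqrt h • Y₁₂ + h • Y₁ + Matrix.toEuclideanLin (g x) lam →
          ζ X₁ = ζ x + Real.sqrt h • z₁₂ + h • z₁ →
          ‖X₁ - x‖ ≤ C * Real.sqrt h ∧ ‖lam‖ ≤ C * Real.sqrt h := by
  set K := (1 + B) * (2 * M)
  set C₀ := 2 * (1 + 2 * M) * K / c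
  refine ⟨min 1 ((c / (2 * B * K)) ^ 2), by positivity, (1 + B) * C₀ + 2 * M, by positivity, ?_⟩
  intro ζ g hζ hg hgB x hGunit hGinv h hh hh₀ Y₁₂ Y₁ z₁₂ z₁ hY₁₂ hY₁ hz₁₂ hz₁ X₁ lam hX hζX
  have hh₁ : h ≤ 1 := hh₀.trans (min_le_left _ _)
  have hsmall : B * ((1 + B) * (2 * M * √h)) ≤ c / 2 := by
    have hs := (Real.sqrt_le_left (by positivity)).mpr (hh₀.trans (min_le_right _ _))
    rw [le_div_iff₀ (by positivity)] at hs
    linarith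
  have hX' : X₁ = x + (√h • Y₁₂ + h • Y₁) + toEuclideanLin (g x) lam := by rw [hX, add_assoc x]
  have hw := norm_sqrt_smul_add_smul_le hh.le hh₁ hY₁₂ hY₁
  have hlam : ‖lam‖ ≤ C₀ * √h := by
    grw [norm_lagrange_le hc hζ hg hgB (hGunit _) (hGinv _) hX' (hζX.trans (add_assoc _ _ _)) hw
      (norm_sqrt_smul_add_smul_le hh.le hh₁ hz₁₂ hz₁) hsmall, Real.sqrt_le_one.mpr hh₁]
    exact le_of_eq (by ring)
  have hC₀ : 0 ≤ C₀ * √h := by positivity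
  constructor
  · grw [norm_sub_le_of_eq_add_add_toEuclideanLin (hgB x) hX', hw, hlam]
    linarith
  · grw [hlam]
    nlinarith [mul_nonneg hB.le hC₀, mul_nonneg hM.le (Real.sqrt_nonneg h)]
end
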